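/- arXiv:1410.7624 — 8 statements merged into one kernel-verified Lean document; each statement's English description precedes it below -/
import Mathlib

section
/- Let M be a ℤ-module and Q : M → ℤ a quadratic map, with polar form B(x,y) := Q(x+y) − Q(x) − Q(y). Let c : M →+ ℤ be an additive homomorphism and v ∈ M an element with c(v) = 2, and assume Q is invariant under the reflection y ↦ y − c(y)•v, i.e. Q(y − c(y)•v) = Q(y) for all y ∈ M. Then B(v, y) = Q(v) · c(y) for all y ∈ M. -/
/-- Lemma (Weyl-invariance gives `B_Q(α^∨, y) = Q(α^∨)·⟨α, y⟩`):
Let `M` be a `ℤ`-module, `Q : M → ℤ` a quadratic map with polar form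
`B(x,y) = Q(x+y) - Q x - Q y`, `c : M →+ ℤ` with `c v = 2`, and assume `Q` is
invariant under the reflection `y ↦ y - c y • v`.  Then `B(v, y) = Q v * c y`. -/
theorem polar_eq_of_reflection_invariant
    {M : Type*} [AddCommGroup M] [Module ℤ M] (Q : QuadraticMap ℤ M ℤ)
    (c : M →+ ℤ) (v : M) (hcv : c v = 2)
    (hinv : ∀ y : M, Q (y - c y • v) = Q y) :
    ∀ y : M, QuadraticMap.polar (⇑Q) v y = Q v * c y := by
  have m1 : ∀ n : ℤ, Q (n • v) = n * n * Q v := by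
    intro n
    rw [← Int.cast_smul_eq_zsmul ℤ n v]
    have := QuadraticMap.map_smul Q ((n : ℤ) : ℤ) v
    simpa [smul_eq_mul, mul_assoc] using this
  have m2 : ∀ (n : ℤ) (y : M),
      QuadraticMap.polar (⇑Q) y (n • v) = n * QuadraticMap.polar (⇑Q) y v := by
    intro n y
    rw [← Int.cast_smul_eq_zsmul ℤ n v]
    have := QuadraticMap.polar_smul_right Q ((n : ℤ) : ℤ) y v
    simp [smul_eq_mul] at this; simpa using this
  have key : ∀ y : M, c y * QuadraticMap.polar (⇑Q) y v = c y * c y * Q v := by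
    intro y
    have h := hinv y
    set n := c y with hn
    have h3 : Q (y + (-n) • v) = Q y + Q ((-n) • v) + QuadraticMap.polar (⇑Q) y ((-n) • v) := by
      unfold QuadraticMap.polar; ring
    rw [sub_eq_add_neg, ← neg_zsmul] at h
    rw [h3, m1, m2] at h
    linarith
  intro y
  have hy := key y
  have hyv := key (y + v)
  have hsymm : QuadraticMap.polar (⇑Q) y v = QuadraticMap.polar (⇑Q) v y :=
    QuadraticMap.polar_comm _ y v
  have hc : c (y + v) = c y + 2 := by rw [map_add, hcv]
  have hvv : QuadraticMap.polar (⇑Q) v v = 2 * Q v := by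
    unfold QuadraticMap.polar
    rw [← two_zsmul v, m1]; ring
  have hpv : QuadraticMap.polar (⇑Q) (y + v) v
      = QuadraticMap.polar (⇑Q) y v + 2 * Q v := by
    rw [QuadraticMap.polar_add_left, hvv]
  rw [hc, hpv] at hyv
  nlinarith [hy, hyv, hsymm]
end

section
/- Let M be a ℤ-module and Q : M → ℤ a quadratic map, with polar form B(x,y) := Q(x+y) − Q(x) − Q(y). Let c : M →+ ℤ be an additive homomorphism and v ∈ M an element with c(v) = 2, and assume Q(y − c(y)•v) = Q(y) for all y ∈ M. Fix a positive integer n, and let y ∈ M be such that n divides B(y, z) for every z ∈ M. Then n / gcd(Q(v), n) divides c(y). -/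
/-!
The reflection `s x = x - c x • v` preserves `Q`, hence its polar form, and sends `v` to `-v`.
Comparing `B(s y, s v) = B(y, v)` with the expansion of the left side gives
`2 B(y, v) = 2 c(y) Q(v)`, so `B(y, v) = c(y) Q(v)`. Thus `n ∣ c(y) Q(v)`, and cancelling
`Q(v)` modulo `n` leaves `n / gcd(Q(v), n) ∣ c(y)`.
-/

namespace QuadraticMap

variable {R M N : Type*} [CommRing R] [AddCommGroup M] [Module R M] [AddCommGroup N] [Module R N]
  (Q : QuadraticMap R M N) (f : M →+ R) (v : M)

theorem polar_sub_smul_sub_smul (hQ : ∀ x, Q (x - f x • v) = Q x) (x y : M) :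
    polar Q (x - f x • v) (y - f y • v) = polar Q x y := by
  have hadd : x - f x • v + (y - f y • v) = x + y - f (x + y) • v := by
    rw [map_add, add_smul]; abel
  rw [polar, polar, hadd, hQ, hQ, hQ]

theorem polar_eq_smul_of_reflection_invariant [IsAddTorsionFree N] (hv : f v = 2)
    (hQ : ∀ x, Q (x - f x • v) = Q x) (x : M) :
    polar Q x v = f x • Q v := by
  have h := polar_sub_smul_sub_smul Q f v hQ x v
  rw [hv, two_smul, sub_add_cancel_left, polar_neg_right, polar_sub_left, polar_smul_left,
    polar_self, neg_sub, sub_eq_iff_eq_add, smul_comm (f x) 2] at h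
  exact nsmul_right_injective two_ne_zero ((two_nsmul _).trans h.symm)

end QuadraticMap

theorem Int.natCast_div_gcd_dvd_of_dvd_mul {n : ℕ} (hn : 0 < n) {a b : ℤ}
    (h : (n : ℤ) ∣ a * b) : ((n / Int.gcd a n : ℕ) : ℤ) ∣ b := by
  have hmod : a * b ≡ a * 0 [ZMOD n] := by
    rwa [mul_zero, Int.modEq_zero_iff_dvd]
  have := Int.modEq_zero_iff_dvd.mp (Int.ModEq.cancel_left_div_gcd (by exact_mod_cast hn) hmod)
  rwa [Int.gcd_comm, Int.natCast_div]

/-- Lemma (`n_α` divides `⟨α, y⟩` for `y ∈ Y_{Q,n}`):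
Let `M` be a `ℤ`-module, `Q : M → ℤ` a quadratic map with polar form
`B(x,y) = Q(x+y) - Q x - Q y`, `c : M →+ ℤ` with `c v = 2`, `Q` invariant under
the reflection `y ↦ y - c y • v`.  If `n ∣ B(y, z)` for all `z`, then
`n / gcd(Q v, n)` divides `c y`. -/
theorem nAlpha_dvd_pairing_of_mem_YQn
    {M : Type*} [AddCommGroup M] [Module ℤ M] (Q : QuadraticMap ℤ M ℤ)
    (c : M →+ ℤ) (v : M) (hcv : c v = 2)
    (hinv : ∀ y : M, Q (y - c y • v) = Q y)
    (n : ℕ) (hn : 0 < n) (y : M)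
    (hy : ∀ z : M, (n : ℤ) ∣ QuadraticMap.polar (⇑Q) y z) :
    ((n / Int.gcd (Q v) (n : ℤ) : ℕ) : ℤ) ∣ c y := by
  -- `hinv` is elaborated with the canonical `zsmul`, not with the given `Module ℤ M` action.
  have hpolar : QuadraticMap.polar Q y v = Q v * c y := by
    rw [Q.polar_eq_smul_of_reflection_invariant c v hcv
      (by simpa only [← Int.cast_smul_eq_zsmul ℤ, Int.cast_id] using hinv), smul_eq_mul, mul_comm]
  exact Int.natCast_div_gcd_dvd_of_dvd_mul hn (hpolar ▸ hy v)
end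

section
/- For every positive integer n and all integers k₁, k₂: (n divides 2k₁ − 3k₂ and n divides −3k₁ + 6k₂) if and only if (n divides k₁ and n / gcd(n, 3) divides k₂). -/
/-! Since `2·2 - (-1)·(-3) = 1`, the pair `(2k₁ - 3k₂, -3k₁ + 6k₂)` is a unimodular transform
of `(k₁, 3k₂)`, so both conditions say `n ∣ k₁` and `n ∣ 3k₂`; and `n ∣ 3k₂` means
`n / gcd(n, 3) ∣ k₂`. -/

theorem dvd_and_dvd_iff_of_mul_sub_mul_eq_one {R : Type*} [CommRing R] {a b c d : R}
    (hdet : a * d - b * c = 1) (n x y : R) :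
    (n ∣ a * x + b * y ∧ n ∣ c * x + d * y) ↔ (n ∣ x ∧ n ∣ y) := by
  constructor
  · rintro ⟨hu, hv⟩
    have hx : x = d * (a * x + b * y) - b * (c * x + d * y) := by linear_combination -x * hdet
    have hy : y = a * (c * x + d * y) - c * (a * x + b * y) := by linear_combination -y * hdet
    exact ⟨hx ▸ dvd_sub (hu.mul_left d) (hv.mul_left b),
      hy ▸ dvd_sub (hv.mul_left a) (hu.mul_left c)⟩
  · rintro ⟨hx, hy⟩
    exact ⟨dvd_add (hx.mul_left a) (hy.mul_left b), dvd_add (hx.mul_left c) (hy.mul_left d)⟩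

theorem Int.natCast_dvd_mul_iff_div_gcd_dvd {m : ℕ} (hm : m ≠ 0) (n : ℕ) (k : ℤ) :
    (n : ℤ) ∣ m * k ↔ ((n / n.gcd m : ℕ) : ℤ) ∣ k := by
  obtain ⟨g, n', m', hg, hcop, rfl, rfl⟩ :=
    Nat.exists_coprime' (Nat.gcd_pos_of_pos_right n hm.bot_lt)
  rw [Nat.gcd_mul_right, hcop.gcd_eq_one, one_mul, Nat.mul_div_cancel _ hg]
  push_cast
  rw [mul_right_comm, mul_dvd_mul_iff_right (by exact_mod_cast hg.ne')]
  exact ⟨(Nat.isCoprime_iff_coprime.mpr hcop).dvd_of_dvd_mul_left, fun h ↦ h.mul_left _⟩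

theorem G2_YQn_eq_YQn_sc_general (n : ℕ) (k₁ k₂ : ℤ) :
    ((n : ℤ) ∣ 2 * k₁ - 3 * k₂ ∧ (n : ℤ) ∣ -3 * k₁ + 6 * k₂) ↔
      ((n : ℤ) ∣ k₁ ∧ ((n / Nat.gcd n 3 : ℕ) : ℤ) ∣ k₂) := by
  rw [← Int.natCast_dvd_mul_iff_div_gcd_dvd three_ne_zero, Nat.cast_ofNat,
    ← dvd_and_dvd_iff_of_mul_sub_mul_eq_one (a := 2) (b := -1) (c := -3) (d := 2) (by norm_num)
      (n : ℤ) k₁ (3 * k₂)]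
  ring_nf

/-- The `G₂` computation: for `n ≥ 1` and integers `k₁, k₂`, one has
`n ∣ 2k₁ - 3k₂` and `n ∣ -3k₁ + 6k₂` iff `n ∣ k₁` and `n / gcd(n,3) ∣ k₂`. -/
theorem G2_YQn_eq_YQn_sc (n : ℕ) (hn : 0 < n) (k₁ k₂ : ℤ) :
    ((n : ℤ) ∣ 2 * k₁ - 3 * k₂ ∧ (n : ℤ) ∣ -3 * k₁ + 6 * k₂) ↔
      ((n : ℤ) ∣ k₁ ∧ ((n / Nat.gcd n 3 : ℕ) : ℤ) ∣ k₂) :=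
  G2_YQn_eq_YQn_sc_general n k₁ k₂
end

section
/- Let r ≥ 2 be an even integer and let k₁, …, k_r be integers, with the convention k₀ = 0. Then the conditions 2 ∣ −k_{j−1} + 2k_j − k_{j+1} for every 1 ≤ j ≤ r−2, 2 ∣ −k_{r−2} + 2k_{r−1} − 2k_r, and 2 ∣ −2k_{r−1} + 4k_r, hold simultaneously if and only if k_i is even for every even index i with i ≤ r−2 and all the k_i with i odd (1 ≤ i ≤ r−1) have the same parity. -/
/-- Type `B_r` computation, `r` even: with the convention `k 0 = 0`, the
divisibility conditions cutting out `Y_{Q,2}` hold iff `k i` is even for every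
even index `i ≤ r - 2` and all `k i` with odd index `1 ≤ i ≤ r - 1` share the
same parity. -/
theorem Br_even_YQ2 (r : ℕ) (hr : 2 ≤ r) (hre : Even r) (k : ℕ → ℤ)
    (h0 : k 0 = 0) :
    ((∀ j, 1 ≤ j → j ≤ r - 2 → (2 : ℤ) ∣ -k (j - 1) + 2 * k j - k (j + 1)) ∧
      (2 : ℤ) ∣ -k (r - 2) + 2 * k (r - 1) - 2 * k r ∧
      (2 : ℤ) ∣ -2 * k (r - 1) + 4 * k r) ↔
      ((∀ i, 1 ≤ i → i ≤ r - 2 → Even i → (2 : ℤ) ∣ k i) ∧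
        (∀ i j, 1 ≤ i → i ≤ r - 1 → 1 ≤ j → j ≤ r - 1 → Odd i → Odd j →
          (2 : ℤ) ∣ k i - k j)) := by
  obtain ⟨m, hm⟩ := hre
  constructor
  · rintro ⟨h1, h2, h3⟩
    have chain : ∀ j, 1 ≤ j → j ≤ r - 2 → (2 : ℤ) ∣ k (j + 1) - k (j - 1) := by
      intro j hj1 hj2
      have := h1 j hj1 hj2
      omega
    have key : ∀ i, i ≤ r - 1 → (2 : ℤ) ∣ k i - k (i % 2) := by
      intro i
      induction i using Nat.strong_induction_on with
      | _ i ih =>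
        intro hi
        rcases Nat.lt_or_ge i 2 with h | h
        · interval_cases i <;> simp
        · have e1 : i - 1 + 1 = i := by omega
          have e2 : i - 1 - 1 = i - 2 := by omega
          have hc := chain (i - 1) (by omega) (by omega)
          rw [e1, e2] at hc
          have hih := ih (i - 2) (by omega) (by omega)
          have e3 : (i - 2) % 2 = i % 2 := by omega
          rw [e3] at hih
          omega
    refine ⟨?_, ?_⟩
    · intro i hi1 hi2 hie
      have hk := key i (by omega)
      rw [Nat.even_iff.mp hie, h0] at hk
      omega
    · intro i j hi1 hi2 hj1 hj2 hio hjo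
      have hki := key i (by omega)
      have hkj := key j (by omega)
      rw [Nat.odd_iff.mp hio] at hki
      rw [Nat.odd_iff.mp hjo] at hkj
      omega
  · rintro ⟨he, ho⟩
    refine ⟨?_, ?_, ?_⟩
    · intro j hj1 hj2
      rcases Nat.even_or_odd j with hje | hjo
      · have hjm : j % 2 = 0 := Nat.even_iff.mp hje
        have := ho (j - 1) (j + 1) (by omega) (by omega) (by omega) (by omega)
          (Nat.odd_iff.mpr (by omega)) (Nat.odd_iff.mpr (by omega))
        omega
      · have hjm : j % 2 = 1 := Nat.odd_iff.mp hjo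
        have hkjm : (2 : ℤ) ∣ k (j - 1) := by
          rcases Nat.lt_or_ge j 2 with h | h
          · have hj : j = 1 := by omega
            subst hj
            simp [h0]
          · exact he (j - 1) (by omega) (by omega) (Nat.even_iff.mpr (by omega))
        have hkjp : (2 : ℤ) ∣ k (j + 1) :=
          he (j + 1) (by omega) (by omega) (Nat.even_iff.mpr (by omega))
        omega
    · have hk : (2 : ℤ) ∣ k (r - 2) := by
        rcases Nat.lt_or_ge r 3 with h | h
        · have h2 : r - 2 = 0 := by omega
          rw [h2, h0]
          exact dvd_zero _
        · exact he (r - 2) (by omega) (by omega) (Nat.even_iff.mpr (by omega))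
      omega
    · omega
end

section
/- Let F be a field, Y an abelian group, and D₁, D₂ : Y × Y → ℤ two biadditive maps. Suppose H : Y → Fˣ is a function satisfying (−1)^{D₂(y₁,y₂) − D₁(y₁,y₂)} = H(y₁ + y₂)·H(y₁)⁻¹·H(y₂)⁻¹ for all y₁, y₂ ∈ Y. Then the map φ : Fˣ × Y → Fˣ × Y defined by φ(b, y) = (b·H(y), y) is a bijection that carries the D₁-twisted multiplication to the D₂-twisted multiplication: φ((a,y₁)·₁(b,y₂)) = φ(a,y₁)·₂φ(b,y₂) for all a, b ∈ Fˣ and y₁, y₂ ∈ Y, where (a,y₁)·ᵢ(b,y₂) := (a·b·(−1)^{Dᵢ(y₁,y₂)}, y₁+y₂). -/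
/-- The multiplication of the incarnated extension `E_D = Fˣ ×_D Y`:
`(a, y₁) · (b, y₂) = (a·b·(-1)^{D(y₁,y₂)}, y₁ + y₂)`. -/
def twistedMul {F : Type*} [Field F] {Y : Type*} [AddCommGroup Y]
    (D : Y → Y → ℤ) (p q : Fˣ × Y) : Fˣ × Y :=
  (p.1 * q.1 * (-1 : Fˣ) ^ (D p.2 q.2), p.2 + q.2)

/-- A morphism `H` in the incarnation category induces a group isomorphism
`Inc(H) : E_{D₁} → E_{D₂}`, `(b, y) ↦ (b·H(y), y)`. -/
theorem incarnation_hom_bijective_and_mul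
    {F : Type*} [Field F] {Y : Type*} [AddCommGroup Y]
    (D₁ D₂ : Y → Y → ℤ)
    (hD₁l : ∀ y z w : Y, D₁ (y + z) w = D₁ y w + D₁ z w)
    (hD₁r : ∀ y z w : Y, D₁ y (z + w) = D₁ y z + D₁ y w)
    (hD₂l : ∀ y z w : Y, D₂ (y + z) w = D₂ y w + D₂ z w)
    (hD₂r : ∀ y z w : Y, D₂ y (z + w) = D₂ y z + D₂ y w)
    (H : Y → Fˣ)
    (hH : ∀ y₁ y₂ : Y, (-1 : Fˣ) ^ (D₂ y₁ y₂ - D₁ y₁ y₂)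
        = H (y₁ + y₂) * (H y₁)⁻¹ * (H y₂)⁻¹) :
    Function.Bijective (fun p : Fˣ × Y => ((p.1 * H p.2, p.2) : Fˣ × Y)) ∧
    (∀ p q : Fˣ × Y,
      (((twistedMul D₁ p q).1 * H (twistedMul D₁ p q).2, (twistedMul D₁ p q).2) : Fˣ × Y)
        = twistedMul D₂ (p.1 * H p.2, p.2) (q.1 * H q.2, q.2)) := by
  constructor
  · exact Function.bijective_iff_has_inverse.mpr
      ⟨fun p => (p.1 * (H p.2)⁻¹, p.2),
       fun p => by simp, fun p => by simp⟩
  · intro p q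
    have h1 : ((H (p.2 + q.2) : F))
        = (-1:F) ^ (D₂ p.2 q.2 - D₁ p.2 q.2) * H p.2 * H q.2 := by
      have hv := congrArg Units.val (hH p.2 q.2)
      push_cast at hv
      rw [hv]
      field_simp
    have h2 : (-1:F) ^ (D₂ p.2 q.2 - D₁ p.2 q.2) * (-1:F) ^ (D₁ p.2 q.2)
        = (-1:F) ^ (D₂ p.2 q.2) := by
      rw [← zpow_add₀ (by norm_num : (-1:F) ≠ 0)]
      ring_nf
    simp only [twistedMul]
    ext
    · push_cast
      rw [h1, ← h2]
      ring
    · rfl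
end

section
/- Let Y be a free ℤ-module of finite rank, n a positive integer, and M a ℤ-submodule of Y with n•Y ⊆ M. Let F be a field whose unit group Fˣ contains an element of order exactly n (a primitive n-th root of unity). Regarding Fˣ as a ℤ-module, the kernel of the map M ⊗_ℤ Fˣ → Y ⊗_ℤ Fˣ induced by the inclusion M ⊆ Y is contained in the image of the map (n•Y) ⊗_ℤ Fˣ → M ⊗_ℤ Fˣ induced by the inclusion n•Y ⊆ M. -/
open TensorProduct

/-!
Choose Smith bases: `Y` has a basis `bᵢ` and `M` a basis `cⱼ = aⱼ • b_{f j}`, and `nY ⊆ M` forces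
`aⱼ ∣ n`, say `aⱼ rⱼ = n`. An element `∑ cⱼ ⊗ tⱼ` of `M ⊗ Fˣ` maps to `∑ b_{f j} ⊗ tⱼ ^ aⱼ`, so
it lies in the kernel exactly when every `tⱼ` is an `aⱼ`-torsion unit. Such a unit is an `n`-th
root of unity, hence a power of `ζ`, and then even an `rⱼ`-th power `sⱼ ^ rⱼ`; so
`cⱼ ⊗ tⱼ = (rⱼ • cⱼ) ⊗ sⱼ = (n • b_{f j}) ⊗ sⱼ` comes from `nY ⊗ Fˣ`.
-/

theorem IsPrimitiveRoot.exists_zpow_eq_of_zpow_eq_one {R : Type*} [CommRing R] [IsDomain R]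
    {ζ : Rˣ} {n : ℕ} [NeZero n] (h : IsPrimitiveRoot ζ n) {a r : ℤ} (har : a * r = n)
    {u : Rˣ} (hu : u ^ a = 1) : ∃ s : Rˣ, s ^ r = u := by
  have ha : a ≠ 0 := by
    rintro rfl
    simp [NeZero.ne n, eq_comm] at har
  have hun : u ^ n = 1 := by
    rw [← zpow_natCast, ← har, zpow_mul, hu, one_zpow]
  obtain ⟨k, rfl⟩ : u ∈ Subgroup.zpowers ζ := by
    rw [h.zpowers_eq]
    exact (mem_rootsOfUnity n u).mpr hun
  have hrk : r ∣ k := by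
    rw [← mul_dvd_mul_iff_left ha, har, mul_comm]
    exact (h.zpow_eq_one_iff_dvd _).mp (by rw [zpow_mul, hu])
  obtain ⟨q, rfl⟩ := hrk
  exact ⟨ζ ^ q, by rw [← zpow_mul, mul_comm]⟩

namespace Module.Basis.SmithNormalForm

variable {R Y A ι : Type*} [CommRing R] [AddCommGroup Y] [Module R Y] [AddCommGroup A]
  [Module R A] {m : ℕ} {M : Submodule R Y} (snf : Basis.SmithNormalForm M ι m)

lemma equivFinsuppOfBasisLeft_rTensor_subtype_apply [DecidableEq ι] (x : M ⊗[R] A) (j : Fin m) :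
    equivFinsuppOfBasisLeft snf.bM (M.subtype.rTensor A x) (snf.f j) =
      snf.a j • equivFinsuppOfBasisLeft snf.bN x j := by
  rw [equivFinsuppOfBasisLeft_apply, equivFinsuppOfBasisLeft_apply, ← LinearMap.rTensor_comp_apply,
    coord_apply_embedding_eq_smul_coord, LinearMap.rTensor_smul, LinearMap.smul_apply, map_smul]

variable {n : R} (hnY : Submodule.map (n • LinearMap.id) ⊤ ≤ M)
include hnY

lemma a_dvd_of_map_smul_top_le (j : Fin m) : snf.a j ∣ n := by
  have hmem : n • snf.bM (snf.f j) ∈ M := hnY ⟨_, trivial, rfl⟩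
  refine ⟨snf.bN.repr ⟨_, hmem⟩ j, ?_⟩
  have h := snf.repr_apply_embedding_eq_repr_smul ⟨_, hmem⟩ (i := j)
  rw [snf.bN.repr.map_smul, Finsupp.smul_apply, smul_eq_mul] at h
  simpa using h

lemma tmul_smul_mem_range_rTensor_inclusion {j : Fin m} {r : R} (hr : snf.a j * r = n) (s : A) :
    snf.bN j ⊗ₜ[R] (r • s) ∈ LinearMap.range ((Submodule.inclusion hnY).rTensor A) := by
  refine ⟨(⟨n • snf.bM (snf.f j), ⟨_, trivial, rfl⟩⟩ : Submodule.map (n • LinearMap.id) ⊤) ⊗ₜ s,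
    ?_⟩
  have hincl :
      Submodule.inclusion hnY ⟨n • snf.bM (snf.f j), ⟨_, trivial, rfl⟩⟩ = r • snf.bN j := by
    ext
    simp [snf.snf, smul_smul, ← hr, mul_comm]
  rw [LinearMap.rTensor_tmul, hincl, smul_tmul]

end Module.Basis.SmithNormalForm

theorem ker_rTensor_subtype_le_range_rTensor_inclusion {R Y A : Type*} [CommRing R] [IsDomain R]
    [IsPrincipalIdealRing R] [AddCommGroup Y] [Module R Y] [Module.Free R Y] [Module.Finite R Y]
    [AddCommGroup A] [Module R A] {n : R} {M : Submodule R Y}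
    (hnY : Submodule.map (n • LinearMap.id) ⊤ ≤ M)
    (hA : ∀ a r : R, a * r = n → ∀ t : A, a • t = 0 → ∃ s : A, r • s = t) :
    LinearMap.ker (M.subtype.rTensor A) ≤
      LinearMap.range ((Submodule.inclusion hnY).rTensor A) := by
  classical
  intro x hx
  obtain ⟨m, snf⟩ := M.smithNormalForm (Module.Free.chooseBasis R Y)
  rw [← (equivFinsuppOfBasisLeft snf.bN).symm_apply_apply x, equivFinsuppOfBasisLeft_symm_apply]
  refine Submodule.finsuppSum_mem _ _ _ _ fun j _ => ?_
  have htorsion : snf.a j • equivFinsuppOfBasisLeft snf.bN x j = 0 := by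
    rw [← snf.equivFinsuppOfBasisLeft_rTensor_subtype_apply, LinearMap.mem_ker.mp hx, map_zero,
      Finsupp.zero_apply]
  obtain ⟨r, hr⟩ := snf.a_dvd_of_map_smul_top_le hnY j
  obtain ⟨s, hs⟩ := hA _ _ hr.symm _ htorsion
  rw [← hs]
  exact snf.tmul_smul_mem_range_rTensor_inclusion hnY hr.symm s

/-- Lemma `Ker(i_{Q,n}) ⊆ Im(i_{nY})`: for a finite-rank free `ℤ`-module `Y`,
a submodule `M` with `nY ⊆ M`, and a field `F` whose unit group contains an
element of order exactly `n`, the kernel of `M ⊗ Fˣ → Y ⊗ Fˣ` is contained in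
the image of `(nY) ⊗ Fˣ → M ⊗ Fˣ`. -/
theorem ker_tensor_le_range_tensor
    {Y : Type*} [AddCommGroup Y] [Module.Free ℤ Y] [Module.Finite ℤ Y]
    (n : ℕ) (hn : 0 < n) (M : Submodule ℤ Y)
    (hnY : Submodule.map ((n : ℤ) • (LinearMap.id : Y →ₗ[ℤ] Y)) ⊤ ≤ M)
    {F : Type*} [Field F] (ζ : Fˣ) (hζ : orderOf ζ = n) :
    LinearMap.ker (LinearMap.rTensor (Additive Fˣ) (Submodule.subtype M)) ≤
      LinearMap.range (LinearMap.rTensor (Additive Fˣ)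
        (Submodule.inclusion hnY)) := by
  have : NeZero n := ⟨hn.ne'⟩
  have hprim : IsPrimitiveRoot ζ n := hζ ▸ IsPrimitiveRoot.orderOf ζ
  refine ker_rTensor_subtype_le_range_rTensor_inclusion hnY fun a r har t ht => ?_
  obtain ⟨s, hs⟩ := hprim.exists_zpow_eq_of_zpow_eq_one har (u := t.toMul)
    (by rw [← toMul_zsmul, ht, toMul_zero])
  exact ⟨.ofMul s, Additive.toMul.injective (by rw [toMul_zsmul, toMul_ofMul, hs])⟩
end

section
/- Let p, q be integers and n ≥ 1 an integer. Set n_α = n / gcd(n, 2p − q) and let L = {(k₁, k₂) ∈ ℤ × ℤ : n ∣ 2p·k₁ + q·k₂ and n ∣ q·k₁ + 2p·k₂}. Then (n_α, −n_α) ∈ L, and there exists y₀ ∈ L such that every element of L can be written uniquely in the form a·(n_α, −n_α) + b·y₀ with a, b ∈ ℤ. -/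
/-!
The sum of coordinates `σ(x₁, x₂) = x₁ + x₂` maps `Y_{Q,n}` onto a subgroup `gℤ` of `ℤ`, with
`g ≠ 0` because `(n, 0) ∈ Y_{Q,n}`. Its kernel is the antidiagonal part
`{(m, -m) : n ∣ (2p - q) m} = ℤ · (n_α, -n_α)`. So `Y_{Q,n}` splits as `ℤ (n_α, -n_α) ⊕ ℤ y₀` for
any `y₀ ∈ Y_{Q,n}` with `σ y₀ = g`.
-/

namespace AddSubgroup

theorem exists_basis_of_ker_existsUnique_zsmul {M : Type*} [AddCommGroup M] (L : AddSubgroup M)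
    (σ : M →+ ℤ) (v : M) (hσv : σ v = 0)
    (hker : ∀ x ∈ L, σ x = 0 → ∃! a : ℤ, a • v = x) (hσL : ∃ x ∈ L, σ x ≠ 0) :
    ∃ y₀ ∈ L, ∀ x ∈ L, ∃! ab : ℤ × ℤ, ab.1 • v + ab.2 • y₀ = x := by
  obtain ⟨g, hg⟩ := Int.subgroup_cyclic (L.map σ)
  have hσ_mul : ∀ x ∈ L, ∃ b : ℤ, b * g = σ x := fun x hx =>
    mem_closure_singleton.mp (hg ▸ mem_map_of_mem σ hx)
  obtain ⟨y₀, hy₀, hσy₀⟩ : g ∈ L.map σ := hg ▸ subset_closure rfl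
  have hg0 : g ≠ 0 := by
    obtain ⟨x, hx, hσx⟩ := hσL
    obtain ⟨b, hb⟩ := hσ_mul x hx
    rintro rfl
    exact hσx (by simpa using hb.symm)
  refine ⟨y₀, hy₀, fun x hx => ?_⟩
  obtain ⟨b, hb⟩ := hσ_mul x hx
  obtain ⟨a, ha, ha_unique⟩ := hker (x - b • y₀) (L.sub_mem hx (L.zsmul_mem hy₀ b))
    (by simp [hσy₀, hb])
  refine ⟨(a, b), by simp [ha], ?_⟩
  rintro ⟨a', b'⟩ hx'
  obtain rfl : b' = b := mul_right_cancel₀ hg0 <| by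
    rw [hb, ← hx']
    simp [hσv, hσy₀]
  simp [ha_unique a' (eq_sub_of_add_eq hx')]

end AddSubgroup

namespace Int

theorem div_gcd_dvd_of_dvd_mul {n k m : ℤ} (hn : n ≠ 0) (h : n ∣ k * m) :
    n / (n.gcd k : ℤ) ∣ m := by
  have hd : 0 < n.gcd k := gcd_pos_of_ne_zero_left k hn
  refine dvd_of_dvd_mul_right_of_gcd_one ?_ (gcd_div_gcd_div_gcd hd)
  rw [← mul_dvd_mul_iff_right (by positivity : (n.gcd k : ℤ) ≠ 0),
    Int.ediv_mul_cancel (gcd_dvd_left ..), mul_right_comm, Int.ediv_mul_cancel (gcd_dvd_right ..)]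
  exact h

theorem dvd_mul_div_gcd (n k : ℤ) : n ∣ k * (n / (n.gcd k : ℤ)) := by
  have := mul_dvd_mul_right (gcd_dvd_right n k) (n / (n.gcd k : ℤ))
  rwa [Int.mul_ediv_cancel' (gcd_dvd_left ..)] at this

theorem div_gcd_ne_zero {n : ℤ} (k : ℤ) (hn : n ≠ 0) : n / (n.gcd k : ℤ) ≠ 0 := by
  intro h
  apply hn
  rw [← Int.ediv_mul_cancel (gcd_dvd_left n k), h, zero_mul]

end Int

/-- `y ↦ (B_Q(y, e₁), B_Q(y, e₂))` for the form with `B_Q(eᵢ, eᵢ) = 2p`, `B_Q(e₁, e₂) = q`. -/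
def bilinFormGL2 (p q : ℤ) : ℤ × ℤ →+ ℤ × ℤ where
  toFun y := (2 * p * y.1 + q * y.2, q * y.1 + 2 * p * y.2)
  map_zero' := by simp
  map_add' x y := by ext <;> simp <;> ring

def YQn (p q n : ℤ) : AddSubgroup (ℤ × ℤ) :=
  ((AddSubgroup.zmultiples n).prod (AddSubgroup.zmultiples n)).comap (bilinFormGL2 p q)

theorem mem_YQn {p q n : ℤ} {y : ℤ × ℤ} :
    y ∈ YQn p q n ↔ n ∣ 2 * p * y.1 + q * y.2 ∧ n ∣ q * y.1 + 2 * p * y.2 := by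
  simp [YQn, bilinFormGL2, AddSubgroup.mem_prod, Int.mem_zmultiples_iff]

theorem mk_zero_mem_YQn (p q n : ℤ) : (n, 0) ∈ YQn p q n :=
  mem_YQn.mpr ⟨⟨2 * p, by ring⟩, ⟨q, by ring⟩⟩

theorem antidiagonal_mem_YQn_iff {p q n m : ℤ} : (m, -m) ∈ YQn p q n ↔ n ∣ (2 * p - q) * m := by
  rw [mem_YQn, show 2 * p * m + q * -m = (2 * p - q) * m by ring,
    show q * m + 2 * p * -m = -((2 * p - q) * m) by ring, dvd_neg, and_self]

theorem existsUnique_zsmul_of_mem_YQn {p q n : ℤ} (hn : n ≠ 0) {x : ℤ × ℤ} (hx : x ∈ YQn p q n)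
    (hsum : x.1 + x.2 = 0) :
    ∃! a : ℤ, a • (n / (n.gcd (2 * p - q) : ℤ), -(n / (n.gcd (2 * p - q) : ℤ))) = x := by
  obtain ⟨m, rfl⟩ : ∃ m, x = (m, -m) := ⟨x.1, Prod.ext rfl (eq_neg_of_add_eq_zero_right hsum)⟩
  obtain ⟨a, rfl⟩ := Int.div_gcd_dvd_of_dvd_mul hn (antidiagonal_mem_YQn_iff.mp hx)
  refine ⟨a, by simp [mul_comm], fun a' ha' => ?_⟩
  have := congrArg Prod.fst ha'
  simp only [Prod.smul_mk, smul_eq_mul, mul_comm _ a] at this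
  exact mul_right_cancel₀ (Int.div_gcd_ne_zero _ hn) this

/-- Lemma (`GL₂` section): with `n_α = n / gcd(n, 2p - q)` and
`L = {(k₁,k₂) : n ∣ 2p·k₁ + q·k₂ and n ∣ q·k₁ + 2p·k₂}`, the element
`(n_α, -n_α)` lies in `L`, and there is `y₀ ∈ L` such that every element of `L`
is uniquely of the form `a·(n_α, -n_α) + b·y₀`. -/
theorem exists_basis_YQn_GL2 (p q : ℤ) (n : ℕ) (hn : 1 ≤ n) :
    ((n : ℤ) ∣ 2 * p * ((n : ℤ) / (Int.gcd (n : ℤ) (2 * p - q) : ℤ)) +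
        q * (-((n : ℤ) / (Int.gcd (n : ℤ) (2 * p - q) : ℤ))) ∧
      (n : ℤ) ∣ q * ((n : ℤ) / (Int.gcd (n : ℤ) (2 * p - q) : ℤ)) +
        2 * p * (-((n : ℤ) / (Int.gcd (n : ℤ) (2 * p - q) : ℤ)))) ∧
    ∃ y₀ : ℤ × ℤ,
      ((n : ℤ) ∣ 2 * p * y₀.1 + q * y₀.2 ∧ (n : ℤ) ∣ q * y₀.1 + 2 * p * y₀.2) ∧
      ∀ x : ℤ × ℤ, ((n : ℤ) ∣ 2 * p * x.1 + q * x.2 ∧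
          (n : ℤ) ∣ q * x.1 + 2 * p * x.2) →
        ∃! ab : ℤ × ℤ,
          ab.1 • (((n : ℤ) / (Int.gcd (n : ℤ) (2 * p - q) : ℤ)),
              -((n : ℤ) / (Int.gcd (n : ℤ) (2 * p - q) : ℤ))) + ab.2 • y₀ = x := by
  have hn0 : (n : ℤ) ≠ 0 := by omega
  let σ : ℤ × ℤ →+ ℤ := (AddMonoidHom.id ℤ).coprod (AddMonoidHom.id ℤ)
  have hσ (x : ℤ × ℤ) : σ x = x.1 + x.2 := rfl
  obtain ⟨y₀, hy₀, hbasis⟩ := (YQn p q n).exists_basis_of_ker_existsUnique_zsmul σ _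
    (by simp [hσ]) (fun x hx hσx => existsUnique_zsmul_of_mem_YQn hn0 hx hσx)
    ⟨_, mk_zero_mem_YQn p q n, by simpa [hσ] using hn0⟩
  exact ⟨mem_YQn.mp (antidiagonal_mem_YQn_iff.mpr (Int.dvd_mul_div_gcd _ _)),
    y₀, mem_YQn.mp hy₀, fun x hx => hbasis x (mem_YQn.mpr hx)⟩
end

section
/- Let H be a group, μ a central subgroup of H containing all commutators (i.e. h⁻¹h'⁻¹hh' ∈ μ for all h, h' ∈ H), K a subgroup of H, and ε : μ → ℂˣ an injective group homomorphism. Let f : H → ℂ be a function satisfying f(z·h) = ε(z)·f(h) for all z ∈ μ and h ∈ H, and f(k₁·h·k₂) = f(h) for all k₁, k₂ ∈ K and h ∈ H. Then f(h) = 0 for every h ∈ H which does not commute with every element of K; that is, the support of f is contained in the centralizer C_H(K) of K in H. -/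
/-- Support of a genuine bi-`K`-invariant function lies in the centralizer of
`K`: if `H` is a group, `μ` a central subgroup containing all commutators,
`K ≤ H`, `ε : μ → ℂˣ` an injective homomorphism, and `f : H → ℂ` satisfies
`f (z·h) = ε(z)·f(h)` and `f (k₁·h·k₂) = f h`, then `f h = 0` whenever `h`
fails to commute with some element of `K`. -/
theorem hecke_support_in_centralizer
    {H : Type*} [Group H] (μ : Subgroup H) (hcentral : μ ≤ Subgroup.center H)
    (hcomm : ∀ h h' : H, h⁻¹ * h'⁻¹ * h * h' ∈ μ)
    (K : Subgroup H) (ε : ↥μ →* ℂˣ) (hε : Function.Injective ε)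
    (f : H → ℂ)
    (hf₁ : ∀ (z : ↥μ) (h : H), f ((z : H) * h) = ((ε z : ℂˣ) : ℂ) * f h)
    (hf₂ : ∀ k₁ ∈ K, ∀ k₂ ∈ K, ∀ h : H, f (k₁ * h * k₂) = f h) :
    ∀ h : H, (¬ ∀ k ∈ K, Commute h k) → f h = 0 := by
  intro h hne
  push_neg at hne
  obtain ⟨k, hk, hnc⟩ := hne
  set z : ↥μ := ⟨h⁻¹ * k⁻¹ * h * k, hcomm h k⟩ with hz
  have hz1 : z ≠ 1 := by
    intro h1
    apply hnc
    have h2 := congrArg (Subtype.val) h1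
    simp only [hz, Subgroup.coe_one] at h2
    have h3 := congrArg (fun x => k * h * x) h2
    simp only [mul_assoc, mul_inv_cancel_left, inv_mul_cancel_left, mul_one] at h3
    exact h3
  have key : h * k = (z : H) * (k * h) := by
    have hzc : (k * h) * (z : H) = (z : H) * (k * h) :=
      Subgroup.mem_center_iff.mp (hcentral z.2) (k * h)
    rw [← hzc]; simp [hz, mul_assoc]
  have e1 : f h = f (h * k) := by
    have := hf₂ 1 K.one_mem k hk h
    simpa using this.symm
  have e2 : f (h * k) = ((ε z : ℂˣ) : ℂ) * f (k * h) := by rw [key, hf₁]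
  have e3 : f (k * h) = f h := by
    have := hf₂ k hk 1 K.one_mem h
    simpa using this
  rw [e2, e3] at e1
  by_contra hf0
  have h1 : (((ε z : ℂˣ) : ℂ) - 1) * f h = 0 := by linear_combination -e1
  rcases mul_eq_zero.mp h1 with hco | hco
  · apply hz1
    apply hε
    rw [map_one]
    exact Units.ext (by simpa using sub_eq_zero.mp hco)
  · exact hf0 hco
end
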